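/- Let d be a positive non-square integer, let √d = [a_0; a_1, a_2, …] be its simple continued fraction expansion with minimal period l and convergents p_n/q_n. Then for every n ≥ 0, |p_n² − d·q_n²| = 1 if and only if n + 1 is a multiple of l. -/

import Mathlib

/-- The `n`-th total quotient `α_n` of the continued fraction expansion of `θ`:
`α_0 = θ`, `α_{n+1} = 1/(α_n - ⌊α_n⌋)`. -/
noncomputable def cfAlpha (θ : ℝ) : ℕ → ℝ
  | 0 => θ
  | n + 1 => 1 / Int.fract (cfAlpha θ n)

/-- The `n`-th partial quotient `a_n` of the continued fraction expansion of `θ`. -/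
noncomputable def cfA (θ : ℝ) (n : ℕ) : ℤ := ⌊cfAlpha θ n⌋

/-- Numerators of the convergents of `θ`, shifted by two:
`cfP θ (n+2) = p_n`, with `p_{-2} = 0`, `p_{-1} = 1`, `p_n = a_n p_{n-1} + p_{n-2}`. -/
noncomputable def cfP (θ : ℝ) : ℕ → ℤ
  | 0 => 0
  | 1 => 1
  | n + 2 => cfA θ n * cfP θ (n + 1) + cfP θ n

/-- Denominators of the convergents of `θ`, shifted by two:
`cfQ θ (n+2) = q_n`, with `q_{-2} = 1`, `q_{-1} = 0`, `q_n = a_n q_{n-1} + q_{n-2}`. -/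
noncomputable def cfQ (θ : ℝ) : ℕ → ℤ
  | 0 => 1
  | 1 => 0
  | n + 2 => cfA θ n * cfQ θ (n + 1) + cfQ θ n

/-!
Write `α_n` for the complete quotients of `√d`. Combining `√d = (α_n p_{n-1} + p_{n-2}) /
(α_n q_{n-1} + q_{n-2})` with the determinant identity gives `α_n s_n = m_n + √d` for integers
`m_n` and `s_n = (-1)^n (p_{n-1}² - d q_{n-1}²)`, and `s_n > 0` because the convergents alternate
around `√d`. As `α_n` is irrational, `s_n = 1` exactly when `α_n - √d` is an integer, that is, when
`α_{n+1} = α_1`. Since an irrational number is determined by its partial quotients, `α_{p+1} = α_1`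
holds iff `p` is a period of `a_1, a_2, …`; so `l` is the minimal period of `α_1` under
`x ↦ 1 / fract x`, and `l ∣ n + 1` iff `α_{n+2} = α_1`.
-/

open Function GenContFract

noncomputable def cfStep (x : ℝ) : ℝ := 1 / Int.fract x

theorem cfAlpha_eq_iterate (θ : ℝ) (n : ℕ) : cfAlpha θ n = cfStep^[n] θ := by
  induction n with
  | zero => rfl
  | succ n ih => rw [iterate_succ_apply', ← ih]; rfl

theorem cfAlpha_cfAlpha (θ : ℝ) (m n : ℕ) : cfAlpha (cfAlpha θ m) n = cfAlpha θ (n + m) := by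
  simp only [cfAlpha_eq_iterate, iterate_add_apply]

theorem cfAlpha_nonneg {θ : ℝ} (hθ : 0 ≤ θ) : ∀ n, 0 ≤ cfAlpha θ n
  | 0 => hθ
  | _ + 1 => one_div_nonneg.mpr (Int.fract_nonneg _)

theorem cfA_nonneg {θ : ℝ} (hθ : 0 ≤ θ) (n : ℕ) : 0 ≤ cfA θ n :=
  Int.floor_nonneg.mpr (cfAlpha_nonneg hθ n)

theorem cfP_nonneg {θ : ℝ} (hθ : 0 ≤ θ) : ∀ n, 0 ≤ cfP θ n
  | 0 => le_rfl
  | 1 => zero_le_one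
  | n + 2 => add_nonneg (mul_nonneg (cfA_nonneg hθ n) (cfP_nonneg hθ (n + 1))) (cfP_nonneg hθ n)

theorem cfQ_nonneg {θ : ℝ} (hθ : 0 ≤ θ) : ∀ n, 0 ≤ cfQ θ n
  | 0 => zero_le_one
  | 1 => le_rfl
  | n + 2 => add_nonneg (mul_nonneg (cfA_nonneg hθ n) (cfQ_nonneg hθ (n + 1))) (cfQ_nonneg hθ n)

theorem cfP_mul_cfQ_sub_cfP_mul_cfQ (θ : ℝ) :
    ∀ n, cfP θ (n + 1) * cfQ θ n - cfP θ n * cfQ θ (n + 1) = (-1) ^ n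
  | 0 => rfl
  | n + 1 => by
    have ih := cfP_mul_cfQ_sub_cfP_mul_cfQ θ n
    simp only [cfP, cfQ] at ih ⊢
    linear_combination (-1 : ℤ) * ih

theorem Irrational.fract_ne_zero {x : ℝ} (hx : Irrational x) : Int.fract x ≠ 0 :=
  sub_ne_zero.mpr (hx.ne_int _)

theorem Irrational.cfAlpha {θ : ℝ} (hθ : Irrational θ) : ∀ n, Irrational (cfAlpha θ n)
  | 0 => hθ
  | n + 1 => by
    rw [_root_.cfAlpha, one_div]
    exact (hθ.cfAlpha n).sub_intCast _ |>.inv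

theorem mul_cfAlpha_cfQ_add {θ : ℝ} (hθ : Irrational θ) : ∀ n,
    θ * (cfAlpha θ n * cfQ θ (n + 1) + cfQ θ n) = cfAlpha θ n * cfP θ (n + 1) + cfP θ n
  | 0 => by simp [cfP, cfQ, cfAlpha]
  | n + 1 => by
    have ih := mul_cfAlpha_cfQ_add hθ n
    have hfract := (hθ.cfAlpha n).fract_ne_zero
    rw [← Int.floor_add_fract (cfAlpha θ n)] at ih
    simp only [_root_.cfAlpha, cfP, cfQ, cfA]
    push_cast at ih ⊢
    field_simp
    linear_combination ih

theorem neg_one_pow_mul_cfP_sub_pos {θ : ℝ} (hθ : Irrational θ) (hθ0 : 0 ≤ θ) (n : ℕ) :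
    0 < (-1) ^ n * (cfP θ (n + 1) - θ * cfQ θ (n + 1)) := by
  have hdet : (cfP θ (n + 1) : ℝ) * cfQ θ n - cfP θ n * cfQ θ (n + 1) = (-1) ^ n :=
    mod_cast cfP_mul_cfQ_sub_cfP_mul_cfQ θ n
  have hprod : (-1) ^ n * (cfP θ (n + 1) - θ * cfQ θ (n + 1)) *
      (cfAlpha θ n * cfQ θ (n + 1) + cfQ θ n) = 1 := by
    have hsq : ((-1 : ℝ) ^ n) ^ 2 = 1 := by rw [pow_right_comm, neg_one_sq, one_pow]
    linear_combination -(-1) ^ n * (cfQ θ (n + 1) : ℝ) * mul_cfAlpha_cfQ_add hθ n +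
      (-1) ^ n * hdet + hsq
  have hden : 0 ≤ cfAlpha θ n * cfQ θ (n + 1) + cfQ θ n := by
    have := cfQ_nonneg hθ0 n
    have := cfQ_nonneg hθ0 (n + 1)
    have := cfAlpha_nonneg hθ0 n
    positivity
  exact pos_of_mul_pos_left (by rw [hprod]; exact one_pos) hden

theorem intFractPair_stream_eq {θ : ℝ} (hθ : Irrational θ) :
    ∀ n, IntFractPair.stream θ n = some (IntFractPair.of (cfAlpha θ n))
  | 0 => IntFractPair.stream_zero θ
  | n + 1 => by
    rw [IntFractPair.stream_succ_of_some (intFractPair_stream_eq hθ n)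
      (hθ.cfAlpha n).fract_ne_zero, _root_.cfAlpha, one_div]
    rfl

theorem genContFract_of_s_get? {θ : ℝ} (hθ : Irrational θ) (n : ℕ) :
    (GenContFract.of θ).s.get? n = some ⟨1, cfA θ (n + 1)⟩ :=
  get?_of_eq_some_of_succ_get?_intFractPair_stream (intFractPair_stream_eq hθ (n + 1))

theorem eq_of_cfA_eq {x y : ℝ} (hx : Irrational x) (hy : Irrational y)
    (h : ∀ n, cfA x n = cfA y n) : x = y := by
  have hof : GenContFract.of x = GenContFract.of y := by
    have hh : (GenContFract.of x).h = (GenContFract.of y).h := by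
      rw [of_h_eq_floor, of_h_eq_floor]; exact congrArg _ (h 0)
    have hs : (GenContFract.of x).s = (GenContFract.of y).s := Stream'.Seq.ext fun n => by
      rw [genContFract_of_s_get? hx, genContFract_of_s_get? hy, h]
    cases hgx : GenContFract.of x
    cases hgy : GenContFract.of y
    simp_all
  exact tendsto_nhds_unique (of_convergence x) (hof ▸ of_convergence y)

theorem isPeriodicPt_cfStep_cfAlpha_one_iff {θ : ℝ} (p : ℕ) :
    IsPeriodicPt cfStep p (cfAlpha θ 1) ↔ cfAlpha θ (p + 1) = cfAlpha θ 1 := by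
  rw [IsPeriodicPt, IsFixedPt, ← cfAlpha_eq_iterate, cfAlpha_cfAlpha]

theorem cfAlpha_add_one_eq_iff {θ : ℝ} (hθ : Irrational θ) (p : ℕ) :
    cfAlpha θ (p + 1) = cfAlpha θ 1 ↔ ∀ n, 1 ≤ n → cfA θ (n + p) = cfA θ n := by
  constructor
  · intro hper n hn
    obtain ⟨m, rfl⟩ := Nat.exists_eq_add_of_le' hn
    rw [cfA, cfA, add_assoc, add_comm 1, ← cfAlpha_cfAlpha, hper, cfAlpha_cfAlpha]
  · intro hper
    refine eq_of_cfA_eq (hθ.cfAlpha (p + 1)) (hθ.cfAlpha 1) fun n => ?_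
    simp only [cfA, cfAlpha_cfAlpha]
    rw [← add_assoc, add_right_comm, ← cfA, ← cfA, hper _ (by omega)]

theorem Function.minimalPeriod_eq_of_isLeast {α : Type*} {f : α → α} {x : α} {l : ℕ}
    (hl : IsLeast {p | 0 < p ∧ IsPeriodicPt f p x} l) : minimalPeriod f x = l := by
  obtain ⟨⟨hl0, hlx⟩, hmin⟩ := hl
  have hpos := minimalPeriod_pos_of_mem_periodicPts ⟨l, hl0, hlx⟩
  exact (hlx.minimalPeriod_le hl0).antisymm (hmin ⟨hpos, isPeriodicPt_minimalPeriod f x⟩)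

theorem Irrational.eq_one_iff_fract_eq {α x : ℝ} (hα : Irrational α) {s m : ℤ}
    (h : α * s = m + x) : s = 1 ↔ Int.fract α = Int.fract x := by
  constructor
  · rintro rfl
    rw [Int.cast_one, mul_one] at h
    rw [h, Int.fract_intCast_add]
  · intro hfract
    by_contra hs
    have hint : α * ((s - 1 : ℤ) : ℝ) = ((m - (⌊α⌋ - ⌊x⌋) : ℤ) : ℝ) := by
      rw [Int.fract, Int.fract] at hfract
      push_cast
      linear_combination h - hfract
    exact (hα.mul_intCast (sub_ne_zero.mpr hs)).ne_int _ hint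

section Sqrt

variable {d : ℕ}

theorem cfAlpha_sqrt_mul_eq (hns : ¬ IsSquare d) (n : ℕ) : ∃ m : ℤ,
    cfAlpha √d n * ((-1) ^ n * (cfP √d (n + 1) ^ 2 - d * cfQ √d (n + 1) ^ 2) : ℤ) =
      m + √d := by
  have hθ : Irrational √d := irrational_sqrt_natCast_iff.mpr hns
  have hdet : (cfP √d (n + 1) : ℝ) * cfQ √d n - cfP √d n * cfQ √d (n + 1) = (-1) ^ n :=
    mod_cast cfP_mul_cfQ_sub_cfP_mul_cfQ √d n
  have hsq : ((-1 : ℝ) ^ n) ^ 2 = 1 := by rw [pow_right_comm, neg_one_sq, one_pow]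
  have hsqrt : √(d : ℝ) ^ 2 = d := Real.sq_sqrt d.cast_nonneg
  refine ⟨(-1) ^ n * (d * cfQ √d n * cfQ √d (n + 1) - cfP √d n * cfP √d (n + 1)), ?_⟩
  push_cast
  linear_combination -(-1) ^ n * (√d * cfQ √d (n + 1) + cfP √d (n + 1)) *
      mul_cfAlpha_cfQ_add hθ n + (-1) ^ n * √d * hdet + √d * hsq +
    (-1) ^ n * (cfAlpha √d n * cfQ √d (n + 1) ^ 2 + cfQ √d n * cfQ √d (n + 1)) * hsqrt

theorem neg_one_pow_mul_cfP_sq_sub_pos (hns : ¬ IsSquare d) (n : ℕ) :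
    0 < (-1) ^ n * (cfP √d (n + 1) ^ 2 - d * cfQ √d (n + 1) ^ 2) := by
  have hθ : Irrational √d := irrational_sqrt_natCast_iff.mpr hns
  have hsign := neg_one_pow_mul_cfP_sub_pos hθ (Real.sqrt_nonneg _) n
  have hP : (0 : ℝ) ≤ cfP √d (n + 1) := mod_cast cfP_nonneg (Real.sqrt_nonneg _) (n + 1)
  have hQ : (0 : ℝ) ≤ √d * cfQ √d (n + 1) :=
    mul_nonneg (Real.sqrt_nonneg _) (mod_cast cfQ_nonneg (Real.sqrt_nonneg _) (n + 1))
  have hsum : 0 < (cfP √d (n + 1) : ℝ) + √d * cfQ √d (n + 1) := by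
    rcases neg_one_pow_eq_or ℝ n with h | h <;> rw [h] at hsign <;> linarith
  have hsqrt : √(d : ℝ) ^ 2 = d := Real.sq_sqrt d.cast_nonneg
  suffices (0 : ℝ) < (-1) ^ n * (cfP √d (n + 1) ^ 2 - d * cfQ √d (n + 1) ^ 2) from
    mod_cast this
  calc (0 : ℝ) < (-1) ^ n * (cfP √d (n + 1) - √d * cfQ √d (n + 1)) *
        (cfP √d (n + 1) + √d * cfQ √d (n + 1)) := mul_pos hsign hsum
    _ = _ := by linear_combination -(-1) ^ n * (cfQ √d (n + 1) : ℝ) ^ 2 * hsqrt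

theorem abs_cfP_sq_sub_mul_cfQ_sq_eq_one_iff (hns : ¬ IsSquare d) (n : ℕ) :
    |cfP √d (n + 1) ^ 2 - d * cfQ √d (n + 1) ^ 2| = 1 ↔ cfAlpha √d (n + 1) = cfAlpha √d 1 := by
  have hθ : Irrational √d := irrational_sqrt_natCast_iff.mpr hns
  obtain ⟨m, hm⟩ := cfAlpha_sqrt_mul_eq hns n
  have habs : |cfP √d (n + 1) ^ 2 - d * cfQ √d (n + 1) ^ 2| =
      (-1) ^ n * (cfP √d (n + 1) ^ 2 - d * cfQ √d (n + 1) ^ 2) := by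
    rw [← abs_of_pos (neg_one_pow_mul_cfP_sq_sub_pos hns n), abs_mul, abs_neg_one_pow, one_mul]
  rw [habs, (hθ.cfAlpha n).eq_one_iff_fract_eq hm, cfAlpha, cfAlpha, cfAlpha, one_div, one_div,
    inv_inj]

end Sqrt

theorem stmt_6_general (d : ℕ) (hns : ¬ IsSquare d) (l : ℕ)
    (hl : IsLeast {p : ℕ | 0 < p ∧ ∀ n, 1 ≤ n →
      cfA (Real.sqrt d) (n + p) = cfA (Real.sqrt d) n} l) (n : ℕ) :
    |cfP (Real.sqrt d) (n + 2) ^ 2 - (d : ℤ) * cfQ (Real.sqrt d) (n + 2) ^ 2| = 1 ↔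
      l ∣ (n + 1) := by
  have hθ : Irrational √d := irrational_sqrt_natCast_iff.mpr hns
  have hmin : minimalPeriod cfStep (cfAlpha √d 1) = l := by
    refine minimalPeriod_eq_of_isLeast ?_
    simpa only [isPeriodicPt_cfStep_cfAlpha_one_iff, cfAlpha_add_one_eq_iff hθ] using hl
  rw [← hmin, ← isPeriodicPt_iff_minimalPeriod_dvd, isPeriodicPt_cfStep_cfAlpha_one_iff]
  exact abs_cfP_sq_sub_mul_cfQ_sq_eq_one_iff hns (n + 1)

/-- for a positive non-square integer `d` with minimal period `l` of the
continued fraction of `√d` and convergents `p_n/q_n` (`p_n = cfP (√d) (n+2)`,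
`q_n = cfQ (√d) (n+2)`): for every `n ≥ 0`, `|p_n² - d q_n²| = 1` iff `l ∣ n + 1`. -/
theorem stmt_6 (d : ℕ) (hd : 0 < d) (hns : ¬ IsSquare d) (l : ℕ)
    (hl : IsLeast {p : ℕ | 0 < p ∧ ∀ n, 1 ≤ n →
      cfA (Real.sqrt d) (n + p) = cfA (Real.sqrt d) n} l) (n : ℕ) :
    |cfP (Real.sqrt d) (n + 2) ^ 2 - (d : ℤ) * cfQ (Real.sqrt d) (n + 2) ^ 2| = 1 ↔
      l ∣ (n + 1) :=
  stmt_6_general d hns l hl n
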